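/- arXiv:2502.17416 — 6 statements merged into one kernel-verified Lean document; each statement's English description precedes it below -/
import Mathlib

section
/- For every l ≥ 0, the full prefix product is invariant under the doubling recursion: g⁽ˡ⁾₀ ∘ g⁽ˡ⁾₁ ∘ ⋯ ∘ g⁽ˡ⁾_n = g₁ ∘ g₂ ∘ ⋯ ∘ g_n. -/
/-- The doubling recursion of Algorithm 1 (group composition): `dbl n g 0 i = g i`
(with `g 0 = e` assumed), and
`dbl n g (l+1) i = dbl n g l ((2i−n−1)⁺) ∘ dbl n g l ((2i−n)⁺)`
(natural subtraction implements the truncation `(·)⁺`). -/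
def dbl {G : Type*} [Group G] (n : ℕ) (g : ℕ → G) : ℕ → ℕ → G
  | 0, i => g i
  | l + 1, i => dbl n g l (2 * i - n - 1) * dbl n g l (2 * i - n)

/-!
For `2i ≤ n` both indices `(2i−n−1)⁺, (2i−n)⁺` are `0`, and for `2i > n` they run through
consecutive pairs ending in `(n−1, n)`. So the factors of one doubling step, read left to right,
are `a 0, …, a 0, a 1, …, a n` (with one extra leading `a 0` when `n` is odd), and since
`a 0 = 1` their product is `a 0 * ⋯ * a n`. Passing from `n` to `n + 2` adds the pair
`a (n+1) * a (n+2)` on the right and a factor `a 0 * a 0 = 1` on the left, so this goes by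
induction in steps of two; induction on `l` then gives the theorem.
-/

open List

section Monoid

variable {M : Type*} [Monoid M]

def doublingStep (n : ℕ) (a : ℕ → M) (i : ℕ) : M :=
  a (2 * i - n - 1) * a (2 * i - n)

lemma doublingStep_zero {a : ℕ → M} (ha : a 0 = 1) (n : ℕ) : doublingStep n a 0 = 1 := by
  simp [doublingStep, ha]

lemma doublingStep_add_two_succ (n : ℕ) (a : ℕ → M) (i : ℕ) :
    doublingStep (n + 2) a (i + 1) = doublingStep n a i := by
  simp only [doublingStep]
  congr 2 <;> omega

lemma doublingStep_self_succ (n : ℕ) (a : ℕ → M) :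
    doublingStep n a (n + 1) = a (n + 1) * a (n + 2) := by
  simp only [doublingStep]
  congr 2 <;> omega

lemma prod_map_doublingStep_add_two {a : ℕ → M} (ha : a 0 = 1) (n : ℕ) :
    ((range (n + 3)).map (doublingStep (n + 2) a)).prod
      = ((range (n + 1)).map (doublingStep n a)).prod * (a (n + 1) * a (n + 2)) := by
  rw [prod_range_succ', prod_range_succ]
  simp only [doublingStep_add_two_succ, Nat.succ_eq_add_one, doublingStep_self_succ,
    doublingStep_zero ha, one_mul]

theorem prod_map_doublingStep {a : ℕ → M} (ha : a 0 = 1) (n : ℕ) :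
    ((range (n + 1)).map (doublingStep n a)).prod = ((range (n + 1)).map a).prod := by
  induction n using Nat.twoStepInduction with
  | zero => simp [doublingStep, ha]
  | one => simp [prod_range_succ, doublingStep, ha]
  | more n ih _ =>
    rw [prod_map_doublingStep_add_two ha, ih, prod_range_succ a (n + 2),
      prod_range_succ a (n + 1), mul_assoc]

end Monoid

section Group

variable {G : Type*} [Group G]

lemma dbl_succ (n : ℕ) (g : ℕ → G) (l : ℕ) : dbl n g (l + 1) = doublingStep n (dbl n g l) :=
  rfl

lemma dbl_apply_zero {n : ℕ} {g : ℕ → G} (hg0 : g 0 = 1) (l : ℕ) : dbl n g l 0 = 1 := by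
  induction l with
  | zero => exact hg0
  | succ l ih => simp [dbl, ih]

theorem prod_map_dbl {n : ℕ} {g : ℕ → G} (hg0 : g 0 = 1) (l : ℕ) :
    ((range (n + 1)).map (dbl n g l)).prod = ((range (n + 1)).map g).prod := by
  induction l with
  | zero => rfl
  | succ l ih => rw [dbl_succ, prod_map_doublingStep (dbl_apply_zero hg0 l), ih]

end Group

lemma List.ofFn_comp_val_eq_map_range {α : Type*} (m : ℕ) (f : ℕ → α) :
    (ofFn fun i : Fin m => f i) = (range m).map f := by
  rw [ofFn_eq_pmap, pmap_eq_map]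

/-- **Invariance of the full prefix product under the doubling recursion.**
For every `l ≥ 0`, `g⁽ˡ⁾₀ ∘ g⁽ˡ⁾₁ ∘ ⋯ ∘ g⁽ˡ⁾_n = g₁ ∘ g₂ ∘ ⋯ ∘ g_n`. -/
theorem doubling_prefix_product_invariant {G : Type*} [Group G] (n : ℕ+) (g : ℕ → G)
    (hg0 : g 0 = 1) (l : ℕ) :
    (List.ofFn fun i : Fin ((n : ℕ) + 1) => dbl (n : ℕ) g l (i : ℕ)).prod
      = (List.ofFn fun i : Fin (n : ℕ) => g ((i : ℕ) + 1)).prod := by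
  rw [ofFn_comp_val_eq_map_range, ofFn_comp_val_eq_map_range _ fun i => g (i + 1),
    prod_map_dbl hg0, prod_range_succ', hg0, one_mul]
end

section
/- For every l ≥ ⌈log₂ n⌉ and every index i with 0 ≤ i < n, the doubling recursion has collapsed all entries before the last to the identity: g⁽ˡ⁾_i = e. -/
lemma dbl_aux {G : Type*} [Group G] (n : ℕ) (hn : 0 < n) (g : ℕ → G)
    (hg0 : g 0 = 1) : ∀ l i, n ≤ 2 ^ l * (n - i) → dbl n g l i = 1 := by
  intro l
  induction l with
  | zero =>
    intro i h
    simp only [pow_zero, one_mul] at h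
    have : i = 0 := by omega
    simpa [dbl, this]
  | succ l ih =>
    intro i h
    have h2 : (1:ℕ) ≤ 2 ^ l := Nat.one_le_two_pow
    have key : ∀ j, 2 * i - n ≤ j → j ≤ 2 * i - n → n ≤ 2 ^ l * (n - j) := by
      intro j h1 h2'
      have hj : j = 2 * i - n := le_antisymm h2' h1
      subst hj
      rcases le_or_gt (2 * i) n with hc | hc
      · have : n - (2 * i - n) = n := by omega
        rw [this]
        calc n = 1 * n := (one_mul n).symm
        _ ≤ 2 ^ l * n := Nat.mul_le_mul_right n h2
      · have : n - (2 * i - n) = 2 * (n - i) := by omega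
        rw [this]
        calc n ≤ 2 ^ (l + 1) * (n - i) := h
        _ = 2 ^ l * (2 * (n - i)) := by ring
    have hb : dbl n g l (2 * i - n) = 1 := ih _ (key _ le_rfl le_rfl)
    have ha : dbl n g l (2 * i - n - 1) = 1 := by
      apply ih
      have hmono : n - (2 * i - n) ≤ n - (2 * i - n - 1) := by omega
      calc n ≤ 2 ^ l * (n - (2 * i - n)) := key _ le_rfl le_rfl
      _ ≤ 2 ^ l * (n - (2 * i - n - 1)) := Nat.mul_le_mul_left _ hmono
    simp [dbl, ha, hb]

/-- **Collapse of all entries before the last.** For every `l ≥ ⌈log₂ n⌉` and every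
index `0 ≤ i < n`, the doubling recursion satisfies `g⁽ˡ⁾_i = e`. -/
theorem doubling_collapses_to_identity {G : Type*} [Group G] (n : ℕ+) (g : ℕ → G)
    (hg0 : g 0 = 1) (l : ℕ) (hl : Nat.clog 2 (n : ℕ) ≤ l) (i : ℕ) (hi : i < (n : ℕ)) :
    dbl (n : ℕ) g l i = 1 := by
  apply dbl_aux (n : ℕ) n.pos g hg0
  have h1 : (n : ℕ) ≤ 2 ^ Nat.clog 2 (n : ℕ) := Nat.le_pow_clog one_lt_two _
  have h2 : (2:ℕ) ^ Nat.clog 2 (n : ℕ) ≤ 2 ^ l := Nat.pow_le_pow_right (by norm_num) hl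
  have h3 : 1 ≤ (n : ℕ) - i := by omega
  calc (n : ℕ) ≤ 2 ^ l := le_trans h1 h2
  _ = 2 ^ l * 1 := (mul_one _).symm
  _ ≤ 2 ^ l * ((n : ℕ) - i) := Nat.mul_le_mul_left _ h3
end

section
/- Let B > 0. For all x, y ∈ ℝ with |x| ≤ B and |y| ≤ B and all M ∈ {0, 1}: relu(x − B(1−M)) − relu(−x − B(1−M)) + relu(y − BM) − relu(−y − BM) = M·x + (1−M)·y. In particular, the control-gate function F(x, y, M) = Mx + (1−M)y on inputs bounded by B = 2^s is computed exactly by a two-layer ReLU network. -/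
/-- The ReLU activation. -/
def relu (z : ℝ) : ℝ := max z 0

lemma relu_sub (z : ℝ) : relu z - relu (-z) = z := by
  simp [relu, max_def]; split <;> split <;> linarith

/-- **Control gate by a two-layer ReLU network.** For `B > 0`, inputs `x, y` bounded by
`B` in absolute value, and a binary mask `M ∈ {0, 1}`:
`relu(x − B(1−M)) − relu(−x − B(1−M)) + relu(y − BM) − relu(−y − BM) = M·x + (1−M)·y`,
so the control-gate function `F(x, y, M) = Mx + (1−M)y` on inputs bounded by `B = 2^s`
is computed exactly by a two-layer ReLU network. -/
theorem control_gate_relu (B x y M : ℝ) (hB : 0 < B) (hx : |x| ≤ B) (hy : |y| ≤ B)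
    (hM : M = 0 ∨ M = 1) :
    relu (x - B * (1 - M)) - relu (-x - B * (1 - M))
        + relu (y - B * M) - relu (-y - B * M)
      = M * x + (1 - M) * y := by
  rw [abs_le] at hx hy
  rcases hM with h | h <;> subst h
  · have h1 : relu (x - B) = 0 := by simp [relu]; linarith
    have h2 : relu (-x - B) = 0 := by simp [relu]; linarith
    have h3 := relu_sub y
    simp only [mul_zero, mul_one, sub_zero, zero_mul, zero_add, one_mul] at *
    rw [h1, h2]; linarith
  · have h1 : relu (y - B) = 0 := by simp [relu]; linarith
    have h2 : relu (-y - B) = 0 := by simp [relu]; linarith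
    have h3 := relu_sub x
    simp only [mul_zero, mul_one, sub_zero, sub_self, one_mul, neg_zero, add_zero] at *
    rw [h1, h2]; linarith
end

section
/- Let d ∈ ℕ+, s ∈ ℕ, and x ∈ ℝ^d, and suppose there is an index k with x_k ≥ x_j + 2^{−s} for all j ≠ k. Define, for each i ∈ {1, …, d}, g_i = 2^s · relu(2^{−s} − Σ_{j ≠ i} relu(x_j − x_i)). Then g_k = 1 and g_i = 0 for every i ≠ k; that is, (g₁, …, g_d) is the standard basis vector e_k, so this ReLU expression computes the (hard) argmax of x whenever the maximizer is unique with margin 2^{−s}. -/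
/-- **Hard argmax by ReLU.** If `x ∈ ℝ^d` has a coordinate `k` with
`x_k ≥ x_j + 2^{−s}` for all `j ≠ k`, then the ReLU expression
`g_i = 2^s · relu(2^{−s} − Σ_{j ≠ i} relu(x_j − x_i))` satisfies `g_k = 1` and `g_i = 0`
for `i ≠ k`; that is, `(g₁, …, g_d)` is the standard basis vector `e_k`. -/
theorem relu_hard_argmax (d s : ℕ) (x : Fin d → ℝ) (k : Fin d)
    (hk : ∀ j, j ≠ k → x j + (2 : ℝ) ^ (-(s : ℤ)) ≤ x k) :
    ∀ i : Fin d,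
      (2 : ℝ) ^ s *
          relu ((2 : ℝ) ^ (-(s : ℤ)) - ∑ j ∈ Finset.univ.erase i, relu (x j - x i))
        = if i = k then 1 else 0 := by
  intro i
  by_cases hik : i = k
  · subst hik
    simp only [if_pos rfl]
    have hsum : ∑ j ∈ Finset.univ.erase i, relu (x j - x i) = 0 := by
      apply Finset.sum_eq_zero
      intro j hj
      have hjk : j ≠ i := (Finset.mem_erase.mp hj).1
      have := hk j hjk
      have hle : x j - x i ≤ 0 := by
        have h2 : (0:ℝ) < (2 : ℝ) ^ (-(s : ℤ)) := by positivity
        linarith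
      simp [relu, max_eq_right hle]
    rw [hsum, sub_zero]
    have h2 : (0:ℝ) ≤ (2 : ℝ) ^ (-(s : ℤ)) := by positivity
    rw [relu, max_eq_left h2]
    rw [← zpow_natCast (2:ℝ) s, ← zpow_add₀ (by norm_num : (2:ℝ) ≠ 0)]
    simp
  · simp only [if_neg hik]
    have hksum : (2 : ℝ) ^ (-(s : ℤ)) ≤ ∑ j ∈ Finset.univ.erase i, relu (x j - x i) := by
      have hmem : k ∈ Finset.univ.erase i := by
        simp [Finset.mem_erase, Ne.symm hik, hik]
      calc (2 : ℝ) ^ (-(s : ℤ)) ≤ relu (x k - x i) := by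
            have := hk i hik
            rw [relu]
            exact le_max_of_le_left (by linarith)
        _ ≤ _ := Finset.single_le_sum (f := fun j => relu (x j - x i)) (fun j _ => le_max_right _ _) hmem
    have : relu ((2 : ℝ) ^ (-(s : ℤ)) - ∑ j ∈ Finset.univ.erase i, relu (x j - x i)) = 0 := by
      rw [relu, max_eq_right (by linarith)]
    rw [this, mul_zero]
end

section
/- Let Σ be a finite alphabet, d ∈ ℕ+, s ∈ ℕ, and let θ_TE : Σ → ℝ^d and θ_OUTPUT : Σ → ℝ^d be arbitrary. Then there exists a function f : ℝ^d → ℝ^d of the form f = A₅ ∘ relu ∘ A₄ ∘ relu ∘ A₃ ∘ relu ∘ A₂ ∘ relu ∘ A₁, where A₁, …, A₅ are affine maps whose intermediate dimensions are at most max(|Σ|², d), such that for every x ∈ ℝ^d for which some v ∈ Σ satisfies ⟨x, θ_OUTPUT(w)⟩ ≤ ⟨x, θ_OUTPUT(v)⟩ − 2^{−s} for all w ∈ Σ with w ≠ v, one has f(x) = θ_TE(v). That is, a 5-layer ReLU network simulates the decoding (argmax over output logits) followed by re-embedding of the decoded token. -/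
open Matrix

/-- The ReLU activation, applied coordinatewise. -/
def vrelu {m : ℕ} (u : Fin m → ℝ) : Fin m → ℝ := fun i => max (u i) 0

/-!
Layer 1 computes, for every ordered pair of tokens `(u, w)`, the clipped gap
`relu (2^s (⟨x, out w⟩ - ⟨x, out u⟩) + 1)`. When `v` wins with margin `2^{-s}`, the gap is `0`
for `u = v ≠ w`, `1` for `w = u`, and at least `2` for `w = v ≠ u`; so layer 2, which outputs
`relu (2 - ∑_w gap (u, w))` at `u`, produces the one-hot vector of `v`. Layers 3 and 4 are the
identity on this nonnegative vector, and layer 5 multiplies it by the matrix whose columns are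
the embeddings `te u`.
-/

theorem vrelu_of_nonneg {m : ℕ} {u : Fin m → ℝ} (hu : 0 ≤ u) : vrelu u = u :=
  funext fun i => max_eq_left (hu i)

section Layers

variable {ι κ : Type*} [Fintype κ]

def reluLayer (M : Matrix ι κ ℝ) (b : ι → ℝ) (y : κ → ℝ) : ι → ℝ :=
  fun i => max ((M *ᵥ y) i + b i) 0

theorem vrelu_submatrix_mulVec_add {m k : ℕ} (M : Matrix ι κ ℝ) (b : ι → ℝ)
    (e₁ : Fin m ≃ ι) (e₂ : Fin k ≃ κ) (y : Fin k → ℝ) :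
    vrelu (M.submatrix e₁ e₂ *ᵥ y + b ∘ e₁) = reluLayer M b (y ∘ e₂.symm) ∘ e₁ := by
  rw [submatrix_mulVec_equiv]
  rfl

end Layers

theorem two_pow_mul_le_sub_one {a b : ℝ} {s : ℕ} (h : a ≤ b - 2 ^ (-(s : ℤ))) :
    2 ^ s * a ≤ 2 ^ s * b - 1 := by
  have h2s : (0 : ℝ) < 2 ^ s := by positivity
  rw [_root_.zpow_neg, zpow_natCast] at h
  calc 2 ^ s * a ≤ 2 ^ s * (b - (2 ^ s)⁻¹) := by gcongr
    _ = 2 ^ s * b - 1 := by rw [mul_sub, mul_inv_cancel₀ h2s.ne']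

section Decoding

variable {A : Type*}

theorem relu_two_sub_sum_relu_eq_single [Fintype A] [DecidableEq A] (g : A → ℝ) (v : A)
    (hg : ∀ w ≠ v, g w ≤ g v - 1) :
    (fun u => max (2 - ∑ w, max (g w - g u + 1) 0) 0) = Pi.single v 1 := by
  funext u
  by_cases huv : u = v
  · subst huv
    have hsum : ∑ w, max (g w - g u + 1) 0 = 1 := by
      rw [Fintype.sum_eq_single u fun w hw => max_eq_right (by linarith [hg w hw])]
      simp
    rw [hsum, Pi.single_eq_same]
    norm_num
  · have hsum : 3 ≤ ∑ w, max (g w - g u + 1) 0 :=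
      calc (3 : ℝ) ≤ max (g u - g u + 1) 0 + max (g v - g u + 1) 0 := by
            have := hg u huv
            rw [max_eq_left (by linarith), max_eq_left (by linarith)]
            linarith
        _ ≤ _ := Finset.add_le_sum (f := fun w => max (g w - g u + 1) 0)
            (fun _ _ => le_max_right _ _) (Finset.mem_univ _) (Finset.mem_univ _) huv
    rw [Pi.single_eq_of_ne huv, max_eq_right (by linarith)]

variable {d : ℕ}

def gapMatrix (s : ℕ) (out : A → Fin d → ℝ) : Matrix (A × A) (Fin d) ℝ :=
  of fun uw => (2 : ℝ) ^ s • (out uw.2 - out uw.1)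

theorem gapMatrix_mulVec (s : ℕ) (out : A → Fin d → ℝ) (x : Fin d → ℝ) (uw : A × A) :
    (gapMatrix s out *ᵥ x) uw = 2 ^ s * (x ⬝ᵥ out uw.2) - 2 ^ s * (x ⬝ᵥ out uw.1) := by
  simp only [gapMatrix, mulVec, of_apply]
  rw [smul_dotProduct, sub_dotProduct, smul_eq_mul, mul_sub, dotProduct_comm,
    dotProduct_comm (out uw.1)]

variable (A) in
def negRowSumMatrix [DecidableEq A] : Matrix A (A × A) ℝ :=
  of fun u uw => if uw.1 = u then -1 else 0

theorem negRowSumMatrix_mulVec [Fintype A] [DecidableEq A] (y : A × A → ℝ) (u : A) :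
    (negRowSumMatrix A *ᵥ y) u = -∑ w, y (u, w) := by
  simp only [negRowSumMatrix, mulVec, dotProduct, of_apply, Fintype.sum_prod_type]
  rw [Fintype.sum_eq_single u fun u' hu' => by simp [hu']]
  simp

theorem reluLayer_gapMatrix (s : ℕ) (out : A → Fin d → ℝ) (x : Fin d → ℝ) :
    reluLayer (gapMatrix s out) 1 x =
      fun uw => max (2 ^ s * (x ⬝ᵥ out uw.2) - 2 ^ s * (x ⬝ᵥ out uw.1) + 1) 0 := by
  funext uw
  rw [reluLayer, gapMatrix_mulVec, Pi.one_apply]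

theorem reluLayer_negRowSumMatrix [Fintype A] [DecidableEq A] (g : A → ℝ) (v : A)
    (hg : ∀ w ≠ v, g w ≤ g v - 1) :
    reluLayer (negRowSumMatrix A) 2 (fun uw => max (g uw.2 - g uw.1 + 1) 0) =
      Pi.single v 1 := by
  rw [← relu_two_sub_sum_relu_eq_single g v hg]
  funext u
  rw [reluLayer, negRowSumMatrix_mulVec, neg_add_eq_sub, Pi.ofNat_apply]

end Decoding

/-- **Decoding + re-embedding by a 5-layer ReLU network.** For a finite alphabet `A`,
arbitrary token embeddings `te : A → ℝ^d` and output (logit) vectors `out : A → ℝ^d`,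
there is a function `f = A₅ ∘ relu ∘ A₄ ∘ relu ∘ A₃ ∘ relu ∘ A₂ ∘ relu ∘ A₁` (the `Aᵢ`
affine, all intermediate dimensions at most `max(|A|², d)`) such that whenever some
token `v` maximizes the logit `⟨x, out v⟩` with margin `2^{−s}`, `f(x) = te v`. -/
theorem decode_embed_five_layer_relu (A : Type) [Fintype A] (d s : ℕ)
    (te out : A → Fin d → ℝ) :
    ∃ (d1 d2 d3 d4 : ℕ),
      d1 ≤ max (Fintype.card A ^ 2) d ∧ d2 ≤ max (Fintype.card A ^ 2) d ∧
      d3 ≤ max (Fintype.card A ^ 2) d ∧ d4 ≤ max (Fintype.card A ^ 2) d ∧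
      ∃ (W1 : Matrix (Fin d1) (Fin d) ℝ) (b1 : Fin d1 → ℝ)
        (W2 : Matrix (Fin d2) (Fin d1) ℝ) (b2 : Fin d2 → ℝ)
        (W3 : Matrix (Fin d3) (Fin d2) ℝ) (b3 : Fin d3 → ℝ)
        (W4 : Matrix (Fin d4) (Fin d3) ℝ) (b4 : Fin d4 → ℝ)
        (W5 : Matrix (Fin d) (Fin d4) ℝ) (b5 : Fin d → ℝ),
        ∀ (x : Fin d → ℝ) (v : A),
          (∀ w : A, w ≠ v →
            x ⬝ᵥ out w ≤ x ⬝ᵥ out v - (2 : ℝ) ^ (-(s : ℤ))) →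
          W5 *ᵥ vrelu (W4 *ᵥ vrelu (W3 *ᵥ vrelu (W2 *ᵥ vrelu (W1 *ᵥ x + b1) + b2) + b3)
              + b4) + b5
            = te v := by
  classical
  set n := Fintype.card A
  let e : Fin n ≃ A := (Fintype.equivFin A).symm
  let p : Fin (n ^ 2) ≃ A × A :=
    (Fintype.equivFinOfCardEq (by rw [Fintype.card_prod, sq])).symm
  have hn : n ≤ max (n ^ 2) d := le_max_of_le_left (Nat.le_self_pow two_ne_zero n)
  refine ⟨n ^ 2, n, n, n, le_max_left _ _, hn, hn, hn,
    (gapMatrix s out).submatrix p (Equiv.refl _), 1, (negRowSumMatrix A).submatrix e p, 2,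
    1, 0, 1, 0, (of te)ᵀ.submatrix id e, 0, fun x v hx => ?_⟩
  have hg : ∀ w ≠ v, 2 ^ s * (x ⬝ᵥ out w) ≤ 2 ^ s * (x ⬝ᵥ out v) - 1 :=
    fun w hw => two_pow_mul_le_sub_one (hx w hw)
  have layer1 : vrelu ((gapMatrix s out).submatrix p (Equiv.refl _) *ᵥ x + 1) =
      reluLayer (gapMatrix s out) 1 x ∘ p :=
    vrelu_submatrix_mulVec_add _ 1 p (Equiv.refl _) x
  have layer2 : vrelu ((negRowSumMatrix A).submatrix e p *ᵥ
      (reluLayer (gapMatrix s out) 1 x ∘ p) + 2) = Pi.single v 1 ∘ e := by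
    refine (vrelu_submatrix_mulVec_add _ 2 e p _).trans ?_
    rw [Function.comp_assoc, p.self_comp_symm, Function.comp_id, reluLayer_gapMatrix]
    exact congrArg (· ∘ e) (reluLayer_negRowSumMatrix (fun u => 2 ^ s * (x ⬝ᵥ out u)) v hg)
  have identity_layer : vrelu ((1 : Matrix (Fin n) (Fin n) ℝ) *ᵥ (Pi.single v 1 ∘ e) + 0) =
      Pi.single v 1 ∘ e := by
    rw [one_mulVec, add_zero]
    have one_hot_nonneg : (0 : A → ℝ) ≤ Pi.single v 1 := by simp
    exact vrelu_of_nonneg fun i => one_hot_nonneg (e i)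
  rw [layer1, layer2, identity_layer, identity_layer, add_zero, submatrix_mulVec_equiv,
    Function.comp_assoc, e.self_comp_symm, Function.comp_id, Function.comp_id, mulVec_single_one]
  rfl
end

section
/- Let G be a finite group, m ∈ ℕ+, and let σ : G → {−1, 1}^m be an injective map. Then for all g, g' ∈ G: Σ_{(h, h') ∈ G × G} relu(⟨σ(h), σ(g)⟩ + ⟨σ(h'), σ(g')⟩ − (2m − 1)) · σ(h ∘ h') = σ(g ∘ g') (equality of vectors in ℝ^m). That is, a two-layer ReLU network with |G|² hidden neurons, neuron (h, h') having incoming weights (σ(h), σ(h')), bias −(2m−1), and outgoing weights σ(h ∘ h'), computes the group composition on sign-vector embeddings. -/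
lemma sign_self_sum (m : ℕ) (u : Fin m → ℝ) (hu : ∀ i, u i = 1 ∨ u i = -1) :
    ∑ i, u i * u i = (m : ℝ) := by
  have : ∀ i ∈ Finset.univ, u i * u i = (1 : ℝ) := by
    intro i _; rcases hu i with h | h <;> rw [h] <;> norm_num
  rw [Finset.sum_congr rfl this]
  simp

lemma sign_ne_sum (m : ℕ) (u w : Fin m → ℝ)
    (hu : ∀ i, u i = 1 ∨ u i = -1) (hw : ∀ i, w i = 1 ∨ w i = -1)
    (hne : u ≠ w) : ∑ i, u i * w i ≤ (m : ℝ) - 2 := by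
  obtain ⟨i0, hi0⟩ := Function.ne_iff.mp hne
  have hterm : ∀ i, u i * w i = 1 ∨ u i * w i = -1 := by
    intro i; rcases hu i with h | h <;> rcases hw i with h' | h' <;>
      rw [h, h'] <;> norm_num
  have hi0' : u i0 * w i0 = -1 := by
    rcases hu i0 with h | h <;> rcases hw i0 with h' | h'
    · exact absurd (h.trans h'.symm) hi0
    · rw [h, h']; norm_num
    · rw [h, h']; norm_num
    · exact absurd (h.trans h'.symm) hi0
  calc ∑ i, u i * w i
      = u i0 * w i0 + ∑ i ∈ Finset.univ.erase i0, u i * w i := by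
        exact (Finset.add_sum_erase _ _ (Finset.mem_univ i0)).symm
    _ ≤ -1 + ∑ i ∈ Finset.univ.erase i0, (1 : ℝ) := by
        rw [hi0']
        gcongr with i hi
        rcases hterm i with h | h <;> rw [h] <;> norm_num
    _ ≤ (m : ℝ) - 2 := by
        have hcard : (Finset.univ.erase i0).card = m - 1 := by
          rw [Finset.card_erase_of_mem (Finset.mem_univ i0)]; simp
        rw [Finset.sum_const, hcard, nsmul_eq_mul]
        have hm1 : 1 ≤ m := Fin.pos_iff_nonempty.mpr ⟨i0⟩
        have : ((m - 1 : ℕ) : ℝ) = (m : ℝ) - 1 := by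
          push_cast [hm1]; ring
        rw [this]; linarith

/-- **Group composition on sign-vector embeddings by a two-layer ReLU network.**
For a finite group `G`, `m ∈ ℕ+`, and an injective embedding `σ : G → {−1,1}^m`, for all
`g, g' ∈ G`:
`Σ_{(h,h') ∈ G×G} relu(⟨σ(h), σ(g)⟩ + ⟨σ(h'), σ(g')⟩ − (2m−1)) · σ(h ∘ h') = σ(g ∘ g')`
as vectors in `ℝ^m`: the two-layer ReLU network with `|G|²` hidden neurons, neuron
`(h,h')` having incoming weights `(σ(h), σ(h'))`, bias `−(2m−1)`, and outgoing weights
`σ(h ∘ h')`, computes the group composition. -/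
theorem group_composition_two_layer_relu (G : Type) [Group G] [Fintype G] (m : ℕ)
    (hm : 0 < m) (σ : G → Fin m → ℝ)
    (hsign : ∀ g i, σ g i = 1 ∨ σ g i = -1)
    (hinj : Function.Injective σ) (g g' : G) :
    ∀ j : Fin m,
      ∑ p : G × G,
          relu ((∑ i, σ p.1 i * σ g i) + (∑ i, σ p.2 i * σ g' i) - (2 * (m : ℝ) - 1))
            * σ (p.1 * p.2) j
        = σ (g * g') j := by
  intro j
  rw [Finset.sum_eq_single (g, g')]
  · rw [sign_self_sum m (σ g) (hsign g), sign_self_sum m (σ g') (hsign g')]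
    have : (m : ℝ) + m - (2 * m - 1) = 1 := by ring
    rw [this]
    simp [relu]
  · rintro ⟨h, h'⟩ _ hne
    have hbound : (∑ i, σ h i * σ g i) + (∑ i, σ h' i * σ g' i) - (2 * (m : ℝ) - 1) ≤ -1 := by
      have hcase : h ≠ g ∨ h' ≠ g' := by
        by_contra hc
        push_neg at hc
        exact hne (Prod.ext hc.1 hc.2)
      have b1 : (∑ i, σ h i * σ g i) ≤ (m : ℝ) := by
        rcases eq_or_ne h g with rfl | hhg
        · rw [sign_self_sum m (σ h) (hsign h)]
        · linarith [sign_ne_sum m (σ h) (σ g) (hsign h) (hsign g) (fun e => hhg (hinj e))]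
      have b2 : (∑ i, σ h' i * σ g' i) ≤ (m : ℝ) := by
        rcases eq_or_ne h' g' with rfl | hhg
        · rw [sign_self_sum m (σ h') (hsign h')]
        · linarith [sign_ne_sum m (σ h') (σ g') (hsign h') (hsign g') (fun e => hhg (hinj e))]
      rcases hcase with hc | hc
      · have := sign_ne_sum m (σ h) (σ g) (hsign h) (hsign g) (fun e => hc (hinj e))
        linarith
      · have := sign_ne_sum m (σ h') (σ g') (hsign h') (hsign g') (fun e => hc (hinj e))
        linarith
    have : relu ((∑ i, σ h i * σ g i) + (∑ i, σ h' i * σ g' i) - (2 * (m : ℝ) - 1)) = 0 := by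
      unfold relu; rw [max_eq_right]; linarith
    rw [this, zero_mul]
  · intro habs; exact absurd (Finset.mem_univ _) habs
end
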